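/- For every N ≥ 1 and all points x_1, …, x_N ∈ ℂ, the determinant of the N × N matrix (K_N(x_i, x_j))_{1 ≤ i,j ≤ N} built from the truncated Ginibre kernel equals e^{−(|x_1|² + ⋯ + |x_N|²)} · ∏_{1 ≤ i < j ≤ N} |x_i − x_j|² / ∏_{k=0}^{N−1} (π·k!); in particular this determinant vanishes exactly when two of the points coincide. -/

import Mathlib

/-!
Writing `Φ = (φ_k(x_i))_{i,k}`, the kernel matrix is `Φ Φᴴ`, so its determinant is `|det Φ|²`.
Pulling the Gaussian weights `e^{−|x_i|²/2}` out of the rows and the normalisations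
`1/√(π k!)` out of the columns leaves the Vandermonde matrix of the points, whose determinant
`∏_{i<j} (x_j − x_i)` vanishes exactly when two points coincide.
-/

open ComplexConjugate

/-- The functions `φ_k(x) = (1/√(π·k!))·e^{−|x|²/2}·x^k`. -/
noncomputable def phi (k : ℕ) (x : ℂ) : ℂ :=
  ((1 / Real.sqrt (Real.pi * k.factorial) : ℝ) : ℂ) *
    ((Real.exp (-(‖x‖) ^ 2 / 2) : ℝ) : ℂ) * x ^ k

/-- The truncated Ginibre kernel of rank `N`:
`K_N(x,y) = ∑_{k=0}^{N−1} φ_k(x)·conj(φ_k(y))`. -/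
noncomputable def ginibreKN (N : ℕ) (x y : ℂ) : ℂ :=
  ∑ k ∈ Finset.range N, phi k x * conj (phi k y)

open Matrix

theorem Matrix.det_mul_conjTranspose_self {𝕜 n : Type*} [RCLike 𝕜] [Fintype n] [DecidableEq n]
    (A : Matrix n n 𝕜) : (A * Aᴴ).det = ((‖A.det‖ ^ 2 : ℝ) : 𝕜) := by
  rw [det_mul, det_conjTranspose, RCLike.star_def, RCLike.mul_conj, RCLike.ofReal_pow]

theorem sq_prod_exp_neg_div_two {ι : Type*} (s : Finset ι) (f : ι → ℝ) :
    (∏ i ∈ s, Real.exp (-f i / 2)) ^ 2 = Real.exp (-∑ i ∈ s, f i) := by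
  rw [← Real.exp_sum, ← Real.exp_nat_mul, ← Finset.sum_neg_distrib, ← Finset.sum_div]
  congr 1
  push_cast
  ring

theorem sq_prod_one_div_sqrt {ι : Type*} (s : Finset ι) (a : ι → ℝ) (ha : ∀ i ∈ s, 0 ≤ a i) :
    (∏ i ∈ s, 1 / Real.sqrt (a i)) ^ 2 = 1 / ∏ i ∈ s, a i := by
  rw [← Finset.prod_pow, one_div, ← Finset.prod_inv_distrib]
  exact Finset.prod_congr rfl fun i hi => by rw [one_div, inv_pow, Real.sq_sqrt (ha i hi)]

noncomputable def phiMatrix {N : ℕ} (x : Fin N → ℂ) : Matrix (Fin N) (Fin N) ℂ :=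
  of fun i k => phi k (x i)

theorem phiMatrix_eq {N : ℕ} (x : Fin N → ℂ) :
    phiMatrix x = diagonal (fun i => ((Real.exp (-‖x i‖ ^ 2 / 2) : ℝ) : ℂ)) * vandermonde x *
      diagonal (fun k : Fin N => ((1 / Real.sqrt (Real.pi * (k : ℕ).factorial) : ℝ) : ℂ)) := by
  ext i k
  simp [phiMatrix, phi, mul_apply, diagonal_apply, vandermonde]
  ring

theorem of_ginibreKN_eq_phiMatrix_mul_conjTranspose {N : ℕ} (x : Fin N → ℂ) :
    (of fun i j : Fin N => ginibreKN N (x i) (x j)) = phiMatrix x * (phiMatrix x)ᴴ := by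
  ext i j
  simp [ginibreKN, phiMatrix, mul_apply, ← Fin.sum_univ_eq_sum_range]

theorem sq_norm_det_phiMatrix {N : ℕ} (x : Fin N → ℂ) :
    ‖(phiMatrix x).det‖ ^ 2 = Real.exp (-∑ i, ‖x i‖ ^ 2) *
      (∏ i, ∏ j ∈ Finset.Ioi i, ‖x i - x j‖ ^ 2) /
      ∏ k ∈ Finset.range N, (Real.pi * k.factorial) := by
  have hweight : ∀ i, ‖((Real.exp (-‖x i‖ ^ 2 / 2) : ℝ) : ℂ)‖ = Real.exp (-‖x i‖ ^ 2 / 2) :=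
    fun i => Complex.norm_of_nonneg (Real.exp_pos _).le
  have hnormalizer : ∀ k : Fin N, ‖((1 / Real.sqrt (Real.pi * (k : ℕ).factorial) : ℝ) : ℂ)‖ =
      1 / Real.sqrt (Real.pi * (k : ℕ).factorial) :=
    fun k => Complex.norm_of_nonneg (by positivity)
  have hdiff : ∀ i j, ‖x j - x i‖ ^ 2 = ‖x i - x j‖ ^ 2 := fun i j => by rw [norm_sub_rev]
  rw [phiMatrix_eq, det_mul, det_mul, det_diagonal, det_diagonal, det_vandermonde]
  simp only [norm_mul, norm_prod, hweight, hnormalizer, mul_pow]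
  rw [sq_prod_exp_neg_div_two,
    Fin.prod_univ_eq_prod_range (fun k => 1 / Real.sqrt (Real.pi * k.factorial)),
    sq_prod_one_div_sqrt _ _ fun k _ => by positivity]
  simp only [← Finset.prod_pow, hdiff]
  ring

theorem det_phiMatrix_eq_zero_iff {N : ℕ} (x : Fin N → ℂ) :
    (phiMatrix x).det = 0 ↔ ∃ i j : Fin N, i ≠ j ∧ x i = x j := by
  have hweight : ∏ i, ((Real.exp (-‖x i‖ ^ 2 / 2) : ℝ) : ℂ) ≠ 0 :=
    Finset.prod_ne_zero_iff.mpr fun i _ => Complex.ofReal_ne_zero.mpr (Real.exp_pos _).ne'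
  have hnormalizer : ∏ k : Fin N, ((1 / Real.sqrt (Real.pi * (k : ℕ).factorial) : ℝ) : ℂ) ≠ 0 :=
    Finset.prod_ne_zero_iff.mpr fun k _ => Complex.ofReal_ne_zero.mpr (by positivity)
  rw [phiMatrix_eq, det_mul, det_mul, det_diagonal, det_diagonal, mul_eq_zero, mul_eq_zero,
    or_iff_right hweight, or_iff_left hnormalizer, det_vandermonde_eq_zero_iff]
  exact ⟨fun ⟨i, j, h, hij⟩ => ⟨i, j, hij, h⟩, fun ⟨i, j, hij, h⟩ => ⟨i, j, h, hij⟩⟩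

theorem ginibre_truncated_det_general (N : ℕ) (x : Fin N → ℂ) :
    (Matrix.of fun i j : Fin N => ginibreKN N (x i) (x j)).det =
        ((Real.exp (-(∑ i, (‖x i‖) ^ 2)) *
            (∏ i, ∏ j ∈ Finset.Ioi i, (‖x i - x j‖) ^ 2) /
            ∏ k ∈ Finset.range N, (Real.pi * k.factorial) : ℝ) : ℂ) ∧
      ((Matrix.of fun i j : Fin N => ginibreKN N (x i) (x j)).det = 0 ↔
        ∃ i j : Fin N, i ≠ j ∧ x i = x j) := by
  rw [of_ginibreKN_eq_phiMatrix_mul_conjTranspose, det_mul_conjTranspose_self,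
    ← det_phiMatrix_eq_zero_iff, ← sq_norm_det_phiMatrix]
  refine ⟨rfl, ?_⟩
  rw [RCLike.ofReal_eq_zero, sq_eq_zero_iff, norm_eq_zero]

/-- For every `N ≥ 1` and all points `x_1, …, x_N : ℂ`, the determinant of the matrix
`(K_N(x_i, x_j))` built from the truncated Ginibre kernel equals
`e^{−(|x_1|² + ⋯ + |x_N|²)} · ∏_{i<j} |x_i − x_j|² / ∏_{k=0}^{N−1} (π·k!)`;
in particular the determinant vanishes exactly when two of the points coincide. -/
theorem ginibre_truncated_det (N : ℕ) (hN : 1 ≤ N) (x : Fin N → ℂ) :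
    (Matrix.of fun i j : Fin N => ginibreKN N (x i) (x j)).det =
        ((Real.exp (-(∑ i, (‖x i‖) ^ 2)) *
            (∏ i, ∏ j ∈ Finset.Ioi i, (‖x i - x j‖) ^ 2) /
            ∏ k ∈ Finset.range N, (Real.pi * k.factorial) : ℝ) : ℂ) ∧
      ((Matrix.of fun i j : Fin N => ginibreKN N (x i) (x j)).det = 0 ↔
        ∃ i j : Fin N, i ≠ j ∧ x i = x j) :=
  ginibre_truncated_det_general N x
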